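/- arXiv:2206.03793 — 3 statements merged into one kernel-verified Lean document; each statement's English description precedes it below -/
import Mathlib

section
/- Let P be an abstract polytope of rank at least 1. Then the prism P ×c I is not a pyramid: there is no abstract polytope Q such that P ×c I is order-isomorphic to Q * pt. -/
universe u v

/-- An abstract polytope of rank `n ≥ -1`: a partial order with a least element (the `⊥` of the
`OrderBot` instance) and a greatest element, in which every maximal chain has exactly `n + 2`
elements, every interval admitting a maximal chain of at least 4 elements is connected, and the
diamond condition holds. -/
structure IsAbstractPolytope (P : Type u) [PartialOrder P] [OrderBot P] (n : ℤ) : Prop where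
  neg_one_le : -1 ≤ n
  exists_top : ∃ t : P, IsTop t
  maxChain_card : ∀ s : Set P, IsMaxChain (· ≤ ·) s → s.ncard = (n + 2).toNat
  connected : ∀ x z : P, x ≤ z →
      (∃ c : Set (Set.Icc x z), IsMaxChain (· ≤ ·) c ∧ 4 ≤ c.ncard) →
      ∀ F G : Set.Icc x z, (F : P) ≠ x → (F : P) ≠ z → (G : P) ≠ x → (G : P) ≠ z →
        Relation.ReflTransGen
          (fun a b : Set.Icc x z =>
            ((a : P) ≠ x ∧ (a : P) ≠ z ∧ (b : P) ≠ x ∧ (b : P) ≠ z) ∧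
              ((a : P) ≤ (b : P) ∨ (b : P) ≤ (a : P))) F G
  diamond : ∀ x z : P, x < z →
      (∀ c : Set (Set.Icc x z), IsMaxChain (· ≤ ·) c → c.ncard = 4) →
      {y : P | x < y ∧ y < z}.ncard = 2

/-- `x` has rank `k` if every maximal chain of the interval `[⊥, x] = Set.Iic x`
has exactly `k + 2` elements. -/
def HasRank {P : Type u} [PartialOrder P] [OrderBot P] (x : P) (k : ℤ) : Prop :=
  ∀ c : Set (Set.Iic x), IsMaxChain (· ≤ ·) c → c.ncard = (k + 2).toNat

/-- The Cartesian product `P ×c Q` of two bounded posets: the subposet of `P × Q`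
consisting of `(⊥, ⊥)` together with all pairs with both entries different from `⊥`.
(The join `P * Q` is just `P × Q` with the componentwise order.) -/
abbrev CartProd (P : Type u) (Q : Type v) [PartialOrder P] [OrderBot P]
    [PartialOrder Q] [OrderBot Q] : Type (max u v) :=
  {x : P × Q // x = (⊥, ⊥) ∨ (x.1 ≠ ⊥ ∧ x.2 ≠ ⊥)}

instance CartProd.instOrderBot (P : Type u) (Q : Type v) [PartialOrder P] [OrderBot P]
    [PartialOrder Q] [OrderBot Q] : OrderBot (CartProd P Q) where
  bot := ⟨(⊥, ⊥), Or.inl rfl⟩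
  bot_le x := show ((⊥, ⊥) : P × Q) ≤ x.val from bot_le

/-- The iterated Cartesian product of a family of bounded posets: tuples which are either
everywhere `⊥` or nowhere `⊥`. -/
abbrev CartPi {ι : Type v} (Q : ι → Type u) [∀ i, PartialOrder (Q i)] [∀ i, OrderBot (Q i)] :
    Type (max u v) :=
  {f : (i : ι) → Q i // (∀ i, f i = ⊥) ∨ (∀ i, f i ≠ ⊥)}

instance CartPi.instOrderBot {ι : Type v} (Q : ι → Type u) [∀ i, PartialOrder (Q i)]
    [∀ i, OrderBot (Q i)] : OrderBot (CartPi Q) where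
  bot := ⟨fun _ => ⊥, Or.inl fun _ => rfl⟩
  bot_le f := show (fun _ => ⊥) ≤ f.val from bot_le

/-- The `k`-fold Cartesian product of a bounded poset with itself. -/
abbrev CartPow (P : Type u) [PartialOrder P] [OrderBot P] (k : ℕ) : Type u :=
  CartPi (fun _ : Fin k => P)

/-- A bundled poset with a least element. -/
structure BddPoset : Type (u + 1) where
  carrier : Type u
  [po : PartialOrder carrier]
  [ob : OrderBot carrier]

attribute [instance] BddPoset.po BddPoset.ob

instance : CoeSort BddPoset.{u} (Type u) := ⟨BddPoset.carrier⟩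

/-- Prime with respect to the join: not order-isomorphic to a join `A * B = A × B` of two
abstract polytopes of rank at least `0`. -/
def JoinPrime (X : Type u) [PartialOrder X] [OrderBot X] : Prop :=
  ¬ ∃ (A B : BddPoset.{u}) (a b : ℤ), 0 ≤ a ∧ 0 ≤ b ∧
      IsAbstractPolytope A.carrier a ∧ IsAbstractPolytope B.carrier b ∧
      Nonempty (X ≃o (A.carrier × B.carrier))

/-- Prime with respect to the Cartesian product: not order-isomorphic to a Cartesian product
of two abstract polytopes of rank at least `1`. -/
def CartPrime (X : Type u) [PartialOrder X] [OrderBot X] : Prop :=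
  ¬ ∃ (A B : BddPoset.{u}) (a b : ℤ), 1 ≤ a ∧ 1 ≤ b ∧
      IsAbstractPolytope A.carrier a ∧ IsAbstractPolytope B.carrier b ∧
      Nonempty (X ≃o CartProd A.carrier B.carrier)

/-- `R` is a factor of `X` with respect to the join. -/
def JoinFactor (R : BddPoset.{u}) (X : Type u) [PartialOrder X] [OrderBot X] : Prop :=
  ∃ S : BddPoset.{u}, (∃ s : ℤ, IsAbstractPolytope S.carrier s) ∧
    Nonempty (X ≃o (R.carrier × S.carrier))

/-- `R` is a factor of `X` with respect to the Cartesian product. -/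
def CartFactor (R : BddPoset.{u}) (X : Type u) [PartialOrder X] [OrderBot X] : Prop :=
  ∃ S : BddPoset.{u}, (∃ s : ℤ, IsAbstractPolytope S.carrier s) ∧
    Nonempty (X ≃o CartProd R.carrier S.carrier)

/-- Relatively prime with respect to the join: no join-prime abstract polytope of rank `≥ 0` is a
join-factor of both. -/
def JoinRelPrime (X : Type u) [PartialOrder X] [OrderBot X]
    (Y : Type u) [PartialOrder Y] [OrderBot Y] : Prop :=
  ¬ ∃ R : BddPoset.{u}, (∃ r : ℤ, 0 ≤ r ∧ IsAbstractPolytope R.carrier r) ∧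
      JoinPrime R.carrier ∧ JoinFactor R X ∧ JoinFactor R Y

/-- Relatively prime with respect to the Cartesian product. -/
def CartRelPrime (X : Type u) [PartialOrder X] [OrderBot X]
    (Y : Type u) [PartialOrder Y] [OrderBot Y] : Prop :=
  ¬ ∃ R : BddPoset.{u}, (∃ r : ℤ, 1 ≤ r ∧ IsAbstractPolytope R.carrier r) ∧
      CartPrime R.carrier ∧ CartFactor R X ∧ CartFactor R Y

/-- A pyramid: order-isomorphic to `Q * pt` for some abstract polytope `Q`, where
`pt = Bool` is the two-element chain. -/
def IsPyramid (X : Type u) [PartialOrder X] [OrderBot X] : Prop :=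
  ∃ Q : BddPoset.{u}, (∃ q : ℤ, IsAbstractPolytope Q.carrier q) ∧
    Nonempty (X ≃o (Q.carrier × Bool))

/-- A prism: order-isomorphic to `Q ×c I` for some abstract polytope `Q`, where
`I = Bool × Bool` is the four-element rank-one polytope. -/
def IsPrism (X : Type u) [PartialOrder X] [OrderBot X] : Prop :=
  ∃ Q : BddPoset.{u}, (∃ q : ℤ, IsAbstractPolytope Q.carrier q) ∧
    Nonempty (X ≃o CartProd Q.carrier (Bool × Bool))

/-- The homomorphism from `Equiv.Perm ι` to automorphisms of `ι → G` permuting the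
coordinates: `σ` sends `v` to `v ∘ σ⁻¹`. -/
def permHom (ι : Type v) (G : Type u) [Group G] : Equiv.Perm ι →* MulAut (ι → G) where
  toFun σ :=
    { toFun := fun v => v ∘ σ.symm
      invFun := fun v => v ∘ σ
      left_inv := fun v => by funext i; simp
      right_inv := fun v => by funext i; simp
      map_mul' := fun v w => rfl }
  map_one' := by apply MulEquiv.ext; intro v; funext i; rfl
  map_mul' σ τ := by apply MulEquiv.ext; intro v; funext i; rfl

/-!
In a pyramid `Q * pt` every facet other than the base `(⊤, false)` contains the apex
`(⊥, true)`, so two distinct facets always share a nontrivial face, except when one of them is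
the apex itself, which is then an atom. In the prism `P ×c I` the two facets `(⊤, v₁)` and
`(⊤, v₂)` meet only in `⊥`, and since `P` has rank at least `1` neither of them is an atom.
-/

lemma IsAbstractPolytope.exists_bot_lt_lt_top {P : Type*} [PartialOrder P] [OrderBot P] {n : ℤ}
    (hP : IsAbstractPolytope P n) (hn : 1 ≤ n) {t : P} (ht : IsTop t) :
    ∃ p : P, ⊥ < p ∧ p < t := by
  obtain ⟨c, hc, -⟩ := (IsChain.empty (r := (· ≤ ·)) (α := P)).exists_maxChain
  have hcard : ({⊥, t} : Set P).ncard < c.ncard := by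
    rw [hP.maxChain_card c hc]
    have hpair := Set.ncard_insert_le (⊥ : P) {t}
    rw [Set.ncard_singleton] at hpair
    omega
  obtain ⟨p, -, hp⟩ := Set.exists_mem_notMem_of_ncard_lt_ncard hcard
  simp only [Set.mem_insert_iff, Set.mem_singleton_iff, not_or] at hp
  exact ⟨p, bot_lt_iff_ne_bot.2 hp.1, (ht p).lt_of_ne hp.2⟩

section Pyramid

variable {Q : Type*} [PartialOrder Q]

lemma Prod.isTop_of_mk_false_covBy {a : Q} {m : Q × Bool} (hm : IsTop m)
    (h : (a, false) ⋖ m) : IsTop a := by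
  have hm_eq : (a, true) = m :=
    (h.eq_or_eq (Prod.mk_le_mk_iff_right.2 bot_le) (hm _)).resolve_left (by simp)
  rw [← hm_eq] at hm
  exact fun z => (hm (z, true)).1

variable [OrderBot Q]

lemma Prod.isAtom_bot_true : IsAtom ((⊥, true) : Q × Bool) :=
  bot_covBy_iff.1 (Prod.mk_covBy_mk_iff_right.2 (Bool.covBy_iff.2 (by decide)))

lemma Prod.not_disjoint_of_covBy_isTop {c d m : Q × Bool} (hm : IsTop m) (hcm : c ⋖ m)
    (hdm : d ⋖ m) (hcd : c ≠ d) (hc : ¬IsAtom c) (hd : ¬IsAtom d) : ¬Disjoint c d := by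
  have not_disjoint_of_le {z : Q × Bool} (hz : z ≠ ⊥) (hzc : z ≤ c) (hzd : z ≤ d) :
      ¬Disjoint c d := fun h => hz (le_bot_iff.1 (h hzc hzd))
  have base_apex_side {a b : Q} (ha : IsTop a) (hb : ¬IsAtom ((b, true) : Q × Bool)) :
      ∃ z : Q × Bool, z ≠ ⊥ ∧ z ≤ (a, false) ∧ z ≤ (b, true) := by
    have hb0 : b ≠ ⊥ := by rintro rfl; exact hb Prod.isAtom_bot_true
    exact ⟨(b, false), fun h => hb0 (congrArg Prod.fst h), ⟨ha b, le_rfl⟩, ⟨le_rfl, bot_le⟩⟩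
  obtain ⟨a, _ | _⟩ := c <;> obtain ⟨b, _ | _⟩ := d
  · have ha := Prod.isTop_of_mk_false_covBy hm hcm
    have hb := Prod.isTop_of_mk_false_covBy hm hdm
    exact absurd (by rw [le_antisymm (hb a) (ha b)]) hcd
  · obtain ⟨z, hz, hzc, hzd⟩ := base_apex_side (Prod.isTop_of_mk_false_covBy hm hcm) hd
    exact not_disjoint_of_le hz hzc hzd
  · obtain ⟨z, hz, hzd, hzc⟩ := base_apex_side (Prod.isTop_of_mk_false_covBy hm hdm) hc
    exact not_disjoint_of_le hz hzc hzd
  · exact not_disjoint_of_le (z := (⊥, true)) (fun h => by cases congrArg Prod.snd h)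
      ⟨bot_le, le_rfl⟩ ⟨bot_le, le_rfl⟩

end Pyramid

section Prism

variable {P Q : Type*} [PartialOrder P] [OrderBot P] [PartialOrder Q] [OrderBot Q]

lemma CartProd.disjoint_of_disjoint_snd {x y : CartProd P Q} (h : Disjoint x.1.2 y.1.2) :
    Disjoint x y := by
  intro z hzx hzy
  rcases z.2 with hz | hz
  · exact (Subtype.ext hz).le
  · exact absurd (le_bot_iff.1 (h hzx.2 hzy.2)) hz.2

lemma CartProd.exists_disjoint_covBy_isTop {p t : P} (hp : ⊥ < p) (hpt : p < t) (ht : IsTop t) :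
    ∃ c d m : CartProd P (Bool × Bool), IsTop m ∧ c ⋖ m ∧ d ⋖ m ∧ c ≠ d ∧
      ¬IsAtom c ∧ ¬IsAtom d ∧ Disjoint c d := by
  have ht0 : t ≠ ⊥ := (hp.trans hpt).ne'
  let facet (b : Bool × Bool) (hb : b ≠ ⊥) : CartProd P (Bool × Bool) := ⟨(t, b), .inr ⟨ht0, hb⟩⟩
  have facet_covBy_top {b : Bool × Bool} (hb : b ≠ ⊥) (hbt : b ⋖ ⊤) :
      facet b hb ⋖ facet ⊤ (by decide) :=
    CovBy.of_image (OrderEmbedding.subtype _) (Prod.mk_covBy_mk_iff_right.2 hbt)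
  have facet_not_isAtom (b : Bool × Bool) (hb : b ≠ ⊥) : ¬IsAtom (facet b hb) := by
    let ridge : CartProd P (Bool × Bool) := ⟨(p, b), .inr ⟨hp.ne', hb⟩⟩
    have hlt : ridge < facet b hb := Prod.mk_lt_mk_iff_left.2 hpt
    exact fun h => hp.ne' (congrArg (·.1.1) (h.lt_iff.1 hlt))
  let v₁ := facet (true, false) (by decide)
  let v₂ := facet (false, true) (by decide)
  have hne : v₁ ≠ v₂ := fun h => by cases congrArg (fun x : CartProd P (Bool × Bool) => x.1.2.1) h
  have hdisj : Disjoint v₁ v₂ := CartProd.disjoint_of_disjoint_snd (disjoint_iff.2 rfl)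
  refine ⟨v₁, v₂, facet ⊤ (by decide), fun z => ⟨ht z.1.1, le_top⟩,
    facet_covBy_top (by decide) ?_, facet_covBy_top (by decide) ?_, hne,
    facet_not_isAtom _ (by decide), facet_not_isAtom _ (by decide), hdisj⟩ <;>
  exact Prod.mk_covBy_mk_iff.2 (by decide)

end Prism

/-- For an abstract polytope `P` of rank at least `1`, the prism `P ×c I` is not a
pyramid (where `I = Bool × Bool` is the rank-one polytope). -/
theorem prism_not_pyramid (P : Type u) [PartialOrder P] [OrderBot P] (n : ℤ) (hn : 1 ≤ n)
    (hP : IsAbstractPolytope P n) :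
    ¬ IsPyramid (CartProd P (Bool × Bool)) := by
  rintro ⟨Q, -, ⟨f⟩⟩
  obtain ⟨t, ht⟩ := hP.exists_top
  obtain ⟨p, hp, hpt⟩ := hP.exists_bot_lt_lt_top hn ht
  obtain ⟨c, d, m, hm, hcm, hdm, hcd, hc, hd, hcd_disj⟩ :=
    CartProd.exists_disjoint_covBy_isTop hp hpt ht
  refine Prod.not_disjoint_of_covBy_isTop (m := f m) (fun z => f.symm_apply_le.1 (hm _))
    ((apply_covBy_apply_iff f).2 hcm) ((apply_covBy_apply_iff f).2 hdm) (f.injective.ne hcd)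
    (by rwa [f.isAtom_iff]) (by rwa [f.isAtom_iff]) ?_
  exact Disjoint.of_orderEmbedding f.symm.toOrderEmbedding (by simpa using hcd_disj)
end

section
/- Let P be an abstract polytope of rank at least 1. Then the pyramid P * pt is not a prism: there is no abstract polytope Q such that P * pt is order-isomorphic to Q ×c I. -/
/-! A pyramid over a polytope of rank at least 1 and a prism are told apart by their facets
(the elements covered by the top). In the prism `Q ×c I` the two facets `Q ×c {v₁}` and
`Q ×c {v₂}` meet only in `⊥`. In the pyramid `P * pt` the facets are the base `(⊤, false)` and
the cones `(F, true)` over facets `F` of `P`; two cones share the apex `(⊥, true)`, and a cone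
meets the base in `(F, false) ≠ ⊥`, since rank at least 1 means `⊥` is not itself a facet
of `P`. -/

universe u v

def HasDisjointFacets (X : Type*) [PartialOrder X] [OrderBot X] : Prop :=
  ∃ a b t : X, IsTop t ∧ a ⋖ t ∧ b ⋖ t ∧ a ≠ b ∧ Disjoint a b

theorem HasDisjointFacets.of_orderIso {X Y : Type*} [PartialOrder X] [OrderBot X]
    [PartialOrder Y] [OrderBot Y] (e : X ≃o Y) (h : HasDisjointFacets Y) :
    HasDisjointFacets X := by
  obtain ⟨a, b, t, ht, hat, hbt, hab, hdis⟩ := h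
  refine ⟨e.symm a, e.symm b, e.symm t, fun x => e.le_symm_apply.2 (ht _),
    (apply_covBy_apply_iff e.symm).2 hat, (apply_covBy_apply_iff e.symm).2 hbt,
    e.symm.injective.ne hab, fun x hxa hxb => ?_⟩
  have hx : e x = ⊥ := le_bot_iff.1 (hdis (e.le_symm_apply.1 hxa) (e.le_symm_apply.1 hxb))
  exact (e.injective (hx.trans e.map_bot.symm)).le

theorem IsAbstractPolytope.not_bot_covBy_top {P : Type*} [PartialOrder P] [OrderBot P] {n : ℤ}
    (hP : IsAbstractPolytope P n) (hn : 1 ≤ n) {t : P} (ht : IsTop t) : ¬ (⊥ : P) ⋖ t := by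
  intro hcov
  have hbot_or_top : ∀ x : P, x = ⊥ ∨ x = t :=
    fun x => (covBy_iff_lt_and_eq_or_eq.1 hcov).2 x bot_le (ht x)
  have hmax : IsMaxChain (· ≤ ·) (Set.univ : Set P) := by
    refine ⟨fun x _ y _ _ => ?_, fun s _ hs => (Set.univ_subset_iff.1 hs).symm⟩
    rcases hbot_or_top x with rfl | rfl
    · exact Or.inl bot_le
    · exact Or.inr (ht y)
  have hcard : (Set.univ : Set P).ncard ≤ 2 := calc
    (Set.univ : Set P).ncard ≤ ({⊥, t} : Set P).ncard :=
      Set.ncard_le_ncard (fun x _ => hbot_or_top x) (Set.toFinite _)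
    _ ≤ 2 := (Set.ncard_insert_le _ _).trans (by simp)
  have := hP.maxChain_card _ hmax
  omega

theorem Prod.covBy_mk_true_iff {P : Type*} [PartialOrder P] {a : P × Bool} {p : P} :
    a ⋖ (p, true) ↔ a.1 ⋖ p ∧ a.2 = true ∨ a = (p, false) := by
  obtain ⟨a₁, a₂⟩ := a
  cases a₂ <;> simp [Prod.covBy_iff, eq_comm]

theorem not_hasDisjointFacets_prod_bool {P : Type*} [PartialOrder P] [OrderBot P] {t : P}
    (ht : IsTop t) (hbt : ¬ (⊥ : P) ⋖ t) : ¬ HasDisjointFacets (P × Bool) := by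
  rintro ⟨a, b, T, hT, haT, hbT, hab, hdis⟩
  obtain rfl : T = (t, true) := le_antisymm (Prod.le_def.2 ⟨ht _, le_top⟩) (hT _)
  rw [Prod.covBy_mk_true_iff] at haT hbT
  obtain ⟨hdis₁, hdis₂⟩ := Prod.disjoint_iff.1 hdis
  have cone_disjoint_base : ∀ {F : P}, F ⋖ t → ¬ Disjoint F t := fun hF hdisj =>
    hbt (le_bot_iff.1 (hdisj le_rfl (ht _)) ▸ hF)
  rcases haT with ⟨ha, ha₂⟩ | rfl <;> rcases hbT with ⟨hb, hb₂⟩ | rfl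
  · rw [ha₂, hb₂] at hdis₂
    exact Bool.false_ne_true (disjoint_self.1 hdis₂).symm
  · exact cone_disjoint_base ha hdis₁
  · exact cone_disjoint_base hb hdis₁.symm
  · exact hab rfl

theorem CartProd.eq_bot_of_snd_eq_bot {P Q : Type*} [PartialOrder P] [OrderBot P]
    [PartialOrder Q] [OrderBot Q] {x : CartProd P Q} (h : x.1.2 = ⊥) : x = ⊥ :=
  Subtype.ext (x.2.resolve_right fun hx => hx.2 h)

theorem CartProd.subsingleton_of_isTop_bot {P Q : Type*} [PartialOrder P] [OrderBot P]
    [PartialOrder Q] [OrderBot Q] (h : IsTop (⊥ : P)) : Subsingleton (CartProd P Q) := by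
  have hbot : ∀ x : CartProd P Q, x = ⊥ :=
    fun x => Subtype.ext (x.2.resolve_right fun hx => hx.1 (le_bot_iff.1 (h _)))
  exact ⟨fun x y => (hbot x).trans (hbot y).symm⟩

theorem hasDisjointFacets_cartProd_bool_bool {Q : Type*} [PartialOrder Q] [OrderBot Q] {t : Q}
    (ht : IsTop t) (ht₀ : t ≠ ⊥) : HasDisjointFacets (CartProd Q (Bool × Bool)) := by
  let face (v : Bool × Bool) (hv : v ≠ ⊥) : CartProd Q (Bool × Bool) :=
    ⟨(t, v), Or.inr ⟨ht₀, hv⟩⟩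
  have face_covBy {v w : Bool × Bool} (hv hw) (h : v ⋖ w) : face v hv ⋖ face w hw :=
    CovBy.of_image (OrderEmbedding.subtype _) (Prod.mk_covBy_mk_iff_right.2 h)
  have h₁ : ((true, false) : Bool × Bool) ≠ ⊥ := by decide
  have h₂ : ((false, true) : Bool × Bool) ≠ ⊥ := by decide
  have h₃ : ((true, true) : Bool × Bool) ≠ ⊥ := by decide
  refine ⟨face _ h₁, face _ h₂, face _ h₃, fun x => ⟨ht _, le_top⟩,
    face_covBy h₁ h₃ (by simp [Prod.covBy_iff]),
    face_covBy h₂ h₃ (by simp [Prod.covBy_iff]),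
    by simp [face], fun x hxa hxb => (CartProd.eq_bot_of_snd_eq_bot ?_).le⟩
  have hI : Disjoint ((true, false) : Bool × Bool) (false, true) :=
    Prod.disjoint_iff.2 ⟨disjoint_bot_right, disjoint_bot_left⟩
  exact le_bot_iff.1 (hI hxa.2 hxb.2)

/-- For an abstract polytope `P` of rank at least `1`, the pyramid `P * pt` is not
a prism (where `pt = Bool` is the two-element chain). -/
theorem pyramid_not_prism (P : Type u) [PartialOrder P] [OrderBot P] (n : ℤ) (hn : 1 ≤ n)
    (hP : IsAbstractPolytope P n) :
    ¬ IsPrism (P × Bool) := by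
  rintro ⟨Q, ⟨q, hQ⟩, ⟨e⟩⟩
  obtain ⟨tQ, htQ⟩ := hQ.exists_top
  obtain ⟨tP, htP⟩ := hP.exists_top
  rcases eq_or_ne tQ ⊥ with rfl | htQ₀
  · have := CartProd.subsingleton_of_isTop_bot (Q := Bool × Bool) htQ
    exact not_subsingleton (P × Bool) e.injective.subsingleton
  · exact not_hasDisjointFacets_prod_bool htP (hP.not_bot_covBy_top hn htP)
      ((hasDisjointFacets_cartProd_bool_bool htQ htQ₀).of_orderIso e)
end

section
/- Let P be an abstract polytope of rank at least 1. Then the pyramid P * pt is prime with respect to the Cartesian product: there are no abstract polytopes A, B, both of rank ≥ 1, such that P * pt is order-isomorphic to A ×c B. -/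
universe u v

/-!
In the pyramid `P × Bool` the apex `m = (⊥, true)` is an atom, every element lies either above
`m` or below the base `c = (⊤, false)`, and every element strictly above `m` dominates a nonzero
element not above `m`. Suppose a Cartesian product `A ×c B` of polytopes of rank `≥ 1` had such
a pair `(m, c)`, say with `m.2 ≰ c.2`. Comparing `m` with `(y, ⊤)` shows that `m.1` is the least
proper face of `A`. For a proper face `y ≠ m.1` of `A`, every nonzero `d ≤ (y, m.2)` then has
`d.1 ≥ m.1` and, as `m.2` is an atom of `B`, `d.2 = m.2`; so `d ≥ m`, a contradiction.
-/

section Polytope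

variable {A : Type u} [PartialOrder A] [OrderBot A] {a : ℤ}

lemma IsAbstractPolytope.exists_notMem (hA : IsAbstractPolytope A a) {s : Set A}
    (hs : s.Finite) (hcard : s.ncard < (a + 2).toNat) : ∃ y, y ∉ s := by
  by_contra! h
  have hchain := hA.maxChain_card _ (maxChain_spec (r := (· ≤ ·)))
  have := Set.ncard_le_ncard (s := maxChain (· ≤ ·)) (fun y _ => h y) hs
  omega

lemma IsAbstractPolytope.exists_ne_ne (hA : IsAbstractPolytope A a) (ha : 1 ≤ a) (p q : A) :
    ∃ y, y ≠ p ∧ y ≠ q := by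
  have hcard : ({p, q} : Set A).ncard ≤ 2 :=
    (Set.ncard_insert_le p {q}).trans (by rw [Set.ncard_singleton])
  obtain ⟨y, hy⟩ := hA.exists_notMem ((Set.finite_singleton q).insert p) (by omega)
  exact ⟨y, by simpa only [Set.mem_insert_iff, Set.mem_singleton_iff, not_or] using hy⟩

lemma IsAbstractPolytope.ne_bot_of_isTop (hA : IsAbstractPolytope A a) (ha : 0 ≤ a) {t : A}
    (ht : IsTop t) : t ≠ ⊥ := by
  obtain ⟨y, hy⟩ := hA.exists_notMem (Set.finite_singleton ⊥)
    (by rw [Set.ncard_singleton]; omega)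
  rintro rfl
  exact hy (le_bot_iff.mp (ht y))

end Polytope

/-- The order-theoretic trace of the apex `m = (⊥, true)` over the base `c = (⊤, false)` of a
pyramid `P × Bool`. -/
structure IsApex {X : Type*} [PartialOrder X] [OrderBot X] (m c : X) : Prop where
  isAtom : IsAtom m
  not_le : ¬ m ≤ c
  le_or_le : ∀ x, m ≤ x ∨ x ≤ c
  exists_le : ∀ e, m < e → ∃ d ≤ e, d ≠ ⊥ ∧ ¬ m ≤ d

lemma IsApex.map {X Y : Type*} [PartialOrder X] [OrderBot X] [PartialOrder Y] [OrderBot Y]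
    {m c : X} (h : IsApex m c) (f : X ≃o Y) : IsApex (f m) (f c) where
  isAtom := (f.isAtom_iff m).mpr h.isAtom
  not_le := by rw [f.le_iff_le]; exact h.not_le
  le_or_le y := by
    simpa only [← f.le_symm_apply, f.symm_apply_le] using h.le_or_le (f.symm y)
  exists_le e hme := by
    obtain ⟨d, hde, hd, hmd⟩ := h.exists_le (f.symm e) (f.lt_symm_apply.mpr hme)
    exact ⟨f d, f.le_symm_apply.mp hde, by simpa only [ne_eq, map_eq_bot_iff] using hd,
      by rwa [f.le_iff_le]⟩

lemma Prod.isApex_bot_true {P : Type u} [PartialOrder P] [OrderBot P] {t : P} (ht : IsTop t) :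
    IsApex ((⊥, true) : P × Bool) (t, false) where
  isAtom := by
    refine ⟨fun h => Bool.noConfusion (congrArg Prod.snd h), ?_⟩
    rintro ⟨p, s⟩ ⟨⟨hp, hs⟩, hne⟩
    cases s
    · exact Prod.ext (le_bot_iff.mp hp) rfl
    · exact absurd ⟨bot_le, le_rfl⟩ hne
  not_le h := Bool.false_lt_true.not_ge h.2
  le_or_le
    | (p, false) => Or.inr ⟨ht p, le_rfl⟩
    | (_, true) => Or.inl ⟨bot_le, le_rfl⟩
  exists_le := by
    rintro ⟨w, s⟩ ⟨-, hne⟩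
    have hw : w ≠ ⊥ := by
      rintro rfl
      exact hne ⟨le_rfl, Bool.le_true s⟩
    exact ⟨(w, false), ⟨le_rfl, Bool.false_le s⟩, fun h => hw (congrArg Prod.fst h),
      fun h => Bool.false_lt_true.not_ge h.2⟩

namespace CartProd

variable {A : Type u} {B : Type v} [PartialOrder A] [OrderBot A] [PartialOrder B] [OrderBot B]

lemma ne_bot_iff {x : CartProd A B} : x ≠ ⊥ ↔ x.val.1 ≠ ⊥ ∧ x.val.2 ≠ ⊥ := by
  refine ⟨fun hx => x.property.resolve_left fun h => hx (Subtype.ext h), ?_⟩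
  rintro ⟨h1, -⟩ rfl
  exact h1 rfl

def swap : CartProd A B ≃o CartProd B A where
  toFun x := ⟨x.val.swap, x.property.imp (congrArg Prod.swap) And.symm⟩
  invFun x := ⟨x.val.swap, x.property.imp (congrArg Prod.swap) And.symm⟩
  left_inv _ := rfl
  right_inv _ := rfl
  map_rel_iff' := Prod.swap_le_swap

lemma isAtom_snd {m : CartProd A B} (hm : IsAtom m) : IsAtom m.val.2 := by
  obtain ⟨hm1, hm2⟩ := ne_bot_iff.mp hm.ne_bot
  refine ⟨hm2, fun b hb => ?_⟩
  by_contra hb0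
  have hlt : (⟨(m.val.1, b), Or.inr ⟨hm1, hb0⟩⟩ : CartProd A B) < m :=
    Prod.lt_of_le_of_lt le_rfl hb
  exact hm1 (congrArg (·.val.1) (hm.lt_iff.mp hlt))

lemma not_isApex_of_not_snd_le (hA : ∀ p : A, ∃ y, y ≠ ⊥ ∧ y ≠ p) {tB : B} (htB : IsTop tB)
    (htB0 : tB ≠ ⊥) {m c : CartProd A B} (h : IsApex m c) (hmc : ¬ m.val.2 ≤ c.val.2) :
    False := by
  obtain ⟨-, hm2⟩ := ne_bot_iff.mp h.isAtom.ne_bot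
  have hmin (y : A) (hy : y ≠ ⊥) : m.val.1 ≤ y :=
    ((h.le_or_le ⟨(y, tB), Or.inr ⟨hy, htB0⟩⟩).resolve_right
      fun hc => hmc ((htB _).trans hc.2)).1
  obtain ⟨y, hy0, hym⟩ := hA m.val.1
  obtain ⟨d, hde, hd0, hmd⟩ := h.exists_le ⟨(y, m.val.2), Or.inr ⟨hy0, hm2⟩⟩
    (lt_of_le_of_ne ⟨hmin y hy0, le_rfl⟩ fun he => hym (congrArg (·.val.1) he).symm)
  obtain ⟨hd1, hd2⟩ := ne_bot_iff.mp hd0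
  have hdm : d.val.2 = m.val.2 := ((isAtom_snd h.isAtom).le_iff.mp hde.2).resolve_left hd2
  exact hmd ⟨hmin _ hd1, hdm.ge⟩

lemma not_isApex {a b : ℤ} (hA : IsAbstractPolytope A a) (ha : 1 ≤ a)
    (hB : IsAbstractPolytope B b) (hb : 1 ≤ b) (m c : CartProd A B) : ¬ IsApex m c := by
  intro h
  obtain ⟨tA, htA⟩ := hA.exists_top
  obtain ⟨tB, htB⟩ := hB.exists_top
  by_cases h2 : m.val.2 ≤ c.val.2
  · have h1 : ¬ m.val.1 ≤ c.val.1 := fun h1 => h.not_le ⟨h1, h2⟩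
    exact not_isApex_of_not_snd_le (hB.exists_ne_ne hb ⊥) htA (hA.ne_bot_of_isTop (by omega) htA)
      (h.map swap) h1
  · exact not_isApex_of_not_snd_le (hA.exists_ne_ne ha ⊥) htB (hB.ne_bot_of_isTop (by omega) htB)
      h h2

end CartProd

theorem pyramid_cartPrime_general (P : Type u) [PartialOrder P] [OrderBot P] (n : ℤ)
    (hP : IsAbstractPolytope P n) :
    CartPrime (P × Bool) := by
  rintro ⟨A, B, a, b, ha, hb, hA, hB, ⟨f⟩⟩
  obtain ⟨t, ht⟩ := hP.exists_top
  exact CartProd.not_isApex hA ha hB hb _ _ ((Prod.isApex_bot_true ht).map f)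

/-- For an abstract polytope `P` of rank at least `1`, the pyramid `P * pt` is
prime with respect to the Cartesian product. -/
theorem pyramid_cartPrime (P : Type u) [PartialOrder P] [OrderBot P] (n : ℤ) (hn : 1 ≤ n)
    (hP : IsAbstractPolytope P n) :
    CartPrime (P × Bool) :=
  pyramid_cartPrime_general P n hP
end
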